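/- Let d ≥ 1 and let e₁, e₂, e₃, e₄ be real-valued Schwartz eigenfunctions of H with respective eigenvalues μ₁², μ₂², μ₃², μ₄² satisfying μ₁² ≠ μ₂² + μ₃² + μ₄². Then ∫_{ℝ^d} e₁e₂e₃e₄ dx = −2(μ₁² − μ₂² − μ₃² − μ₄²)^{−1} [ ∫_{ℝ^d} (∇e₂·∇e₃) e₁e₄ dx + ∫_{ℝ^d} (∇e₂·∇e₄) e₁e₃ dx + ∫_{ℝ^d} (∇e₃·∇e₄) e₁e₂ dx + ∫_{ℝ^d} |x|² e₁e₂e₃e₄ dx ]. -/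

import Mathlib

open MeasureTheory Complex
open scoped BigOperators ComplexConjugate

noncomputable section

abbrev ESp (d : ℕ) := EuclideanSpace ℝ (Fin d)

/-- Partial derivative in the `j`-th coordinate direction. -/
def pd {F : Type*} [NormedAddCommGroup F] [NormedSpace ℝ F] (d : ℕ) (j : Fin d)
    (f : ESp d → F) : ESp d → F :=
  fun x => fderiv ℝ f x (EuclideanSpace.single j 1)

/-- The Laplacian. -/
def lap {F : Type*} [NormedAddCommGroup F] [NormedSpace ℝ F] (d : ℕ)
    (f : ESp d → F) : ESp d → F :=
  fun x => ∑ j : Fin d, pd d j (pd d j f) x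

/-- The quantum harmonic oscillator `H f = -Δ f + |x|² f`. -/
def Hop {F : Type*} [NormedAddCommGroup F] [NormedSpace ℝ F] (d : ℕ)
    (f : ESp d → F) : ESp d → F :=
  fun x => - lap d f x + (‖x‖ ^ 2 : ℝ) • f x

/-- `e` is a Schwartz eigenfunction of `H` with eigenvalue `μ²`, `μ > 0`. -/
def IsEigen {F : Type*} [NormedAddCommGroup F] [NormedSpace ℝ F] (d : ℕ) (μ : ℝ)
    (e : ESp d → F) : Prop :=
  0 < μ ∧ (∃ φ : SchwartzMap (ESp d) F, ⇑φ = e) ∧ ∀ x, Hop d e x = (μ ^ 2) • e x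

/-- The family `e` with square-root eigenvalues `μ` is spectrally localized at scale `N`. -/
def Localized (d : ℕ) (N : ℝ) {m : ℕ} (μ : Fin m → ℝ) (e : Fin m → ESp d → ℂ) : Prop :=
  ∀ j, IsEigen d (μ j) (e j) ∧ N ≤ μ j ∧ μ j ≤ 2 * N

/-- The linear Hermite–Schrödinger evolution `e^{-itH} (∑ⱼ eⱼ)`. -/
def evol {d m : ℕ} (μ : Fin m → ℝ) (e : Fin m → ESp d → ℂ) (t : ℝ) (x : ESp d) : ℂ :=
  ∑ j, Complex.exp (-(Complex.I * (t : ℂ) * ((μ j : ℂ)) ^ 2)) * e j x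

/-- The `L²(ℝ^d)` norm. -/
def L2 {F : Type*} [NormedAddCommGroup F] (d : ℕ) (f : ESp d → F) : ℝ :=
  (∫ x : ESp d, ‖f x‖ ^ 2) ^ ((1 : ℝ) / 2)

/-- The space-time `L²([0,T] × ℝ^d)` norm. -/
def stL2 (d : ℕ) (T : ℝ) (G : ℝ → ESp d → ℂ) : ℝ :=
  (∫ t in (0:ℝ)..T, ∫ x : ESp d, ‖G t x‖ ^ 2) ^ ((1 : ℝ) / 2)


/-!
Green's identity `∫ e₁ Δ(e₂e₃e₄) = ∫ (Δe₁) e₂e₃e₄` holds for Schwartz functions. Expanding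
`Δ(e₂e₃e₄)` by the Leibniz rule produces the three gradient pairings `2 ∇eᵢ·∇eⱼ eₖ`, and
substituting `Δeᵢ = (|x|² - μᵢ²) eᵢ` turns the remaining terms into
`(μ₁² - μ₂² - μ₃² - μ₄²) e₁e₂e₃e₄ + 2 |x|² e₁e₂e₃e₄`. So `(μ₁² - μ₂² - μ₃² - μ₄²) ∫ e₁e₂e₃e₄`
equals `-2` times the bracket, and the coefficient is nonzero.
-/

open scoped SchwartzMap LineDeriv Laplacian

section Schwartz

variable {E F : Type*} [NormedAddCommGroup E] [NormedSpace ℝ E]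
  [NormedAddCommGroup F] [NormedSpace ℝ F]

def IsSchwartz (f : E → F) : Prop := ∃ φ : 𝓢(E, F), ⇑φ = f

namespace IsSchwartz

theorem zero : IsSchwartz (0 : E → F) := ⟨0, rfl⟩

theorem add {f g : E → F} (hf : IsSchwartz f) (hg : IsSchwartz g) : IsSchwartz (f + g) := by
  obtain ⟨φ, rfl⟩ := hf
  obtain ⟨ψ, rfl⟩ := hg
  exact ⟨φ + ψ, rfl⟩

theorem fun_sum {ι : Type*} {s : Finset ι} {f : ι → E → F} (hf : ∀ i ∈ s, IsSchwartz (f i)) :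
    IsSchwartz (fun x => ∑ i ∈ s, f i x) := by
  simpa only [← Finset.sum_apply] using Finset.sum_induction f IsSchwartz (fun _ _ => add) zero hf

theorem mul {A : Type*} [NormedRing A] [NormedAlgebra ℝ A] {f g : E → A}
    (hf : IsSchwartz f) (hg : IsSchwartz g) : IsSchwartz (fun x => f x * g x) := by
  obtain ⟨φ, rfl⟩ := hf
  obtain ⟨ψ, rfl⟩ := hg
  exact ⟨SchwartzMap.pairing (ContinuousLinearMap.mul ℝ A) φ ψ, rfl⟩

theorem temperate_smul {g : E → ℝ} (hg : g.HasTemperateGrowth) {f : E → F} (hf : IsSchwartz f) :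
    IsSchwartz (fun x => g x • f x) := by
  obtain ⟨φ, rfl⟩ := hf
  exact ⟨SchwartzMap.smulLeftCLM F g φ, SchwartzMap.smulLeftCLM_apply hg φ⟩

theorem fderiv_apply {f : E → F} (hf : IsSchwartz f) (m : E) :
    IsSchwartz (fun x => fderiv ℝ f x m) := by
  obtain ⟨φ, rfl⟩ := hf
  exact ⟨∂_{m} φ, funext (SchwartzMap.lineDerivOp_apply_eq_fderiv m φ)⟩

theorem differentiable {f : E → F} (hf : IsSchwartz f) : Differentiable ℝ f := by
  obtain ⟨φ, rfl⟩ := hf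
  exact φ.differentiable

theorem integrable [FiniteDimensional ℝ E] [MeasurableSpace E] [BorelSpace E] {μ : Measure E}
    [μ.HasTemperateGrowth] {f : E → F} (hf : IsSchwartz f) : Integrable f μ := by
  obtain ⟨φ, rfl⟩ := hf
  exact φ.integrable

end IsSchwartz

end Schwartz

section EuclideanSpace

variable {d : ℕ}

def gradInner (d : ℕ) (f g : ESp d → ℝ) : ESp d → ℝ :=
  fun x => ∑ j : Fin d, pd d j f x * pd d j g x

theorem IsSchwartz.pd {f : ESp d → ℝ} (hf : IsSchwartz f) (j : Fin d) : IsSchwartz (pd d j f) :=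
  hf.fderiv_apply _

theorem IsSchwartz.lap {f : ESp d → ℝ} (hf : IsSchwartz f) : IsSchwartz (lap d f) :=
  IsSchwartz.fun_sum fun j _ => (hf.pd j).pd j

theorem IsSchwartz.gradInner {f g : ESp d → ℝ} (hf : IsSchwartz f) (hg : IsSchwartz g) :
    IsSchwartz (gradInner d f g) :=
  IsSchwartz.fun_sum fun j _ => (hf.pd j).mul (hg.pd j)

theorem pd_add {f g : ESp d → ℝ} (hf : Differentiable ℝ f) (hg : Differentiable ℝ g)
    (j : Fin d) (x : ESp d) :
    pd d j (fun y => f y + g y) x = pd d j f x + pd d j g x := by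
  simp [pd, fderiv_fun_add (hf x) (hg x)]

theorem pd_mul {f g : ESp d → ℝ} (hf : Differentiable ℝ f) (hg : Differentiable ℝ g)
    (j : Fin d) (x : ESp d) :
    pd d j (fun y => f y * g y) x = pd d j f x * g x + f x * pd d j g x := by
  simp only [pd, fderiv_fun_mul (hf x) (hg x), add_apply, smul_apply, smul_eq_mul]
  ring

theorem pd_pd_mul {f g : ESp d → ℝ} (hf : IsSchwartz f) (hg : IsSchwartz g) (j : Fin d)
    (x : ESp d) :
    pd d j (pd d j (fun y => f y * g y)) x
      = pd d j (pd d j f) x * g x + 2 * (pd d j f x * pd d j g x) + f x * pd d j (pd d j g) x := by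
  have hfg : pd d j (fun y => f y * g y) = fun y => pd d j f y * g y + f y * pd d j g y :=
    funext (pd_mul hf.differentiable hg.differentiable j)
  rw [hfg, pd_add ((hf.pd j).mul hg).differentiable (hf.mul (hg.pd j)).differentiable,
    pd_mul (hf.pd j).differentiable hg.differentiable,
    pd_mul hf.differentiable (hg.pd j).differentiable]
  ring

theorem lap_mul {f g : ESp d → ℝ} (hf : IsSchwartz f) (hg : IsSchwartz g) (x : ESp d) :
    lap d (fun y => f y * g y) x = lap d f x * g x + 2 * gradInner d f g x + f x * lap d g x := by
  simp only [lap, gradInner, pd_pd_mul hf hg, Finset.sum_add_distrib, Finset.sum_mul,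
    Finset.mul_sum]

theorem gradInner_mul_left {f g h : ESp d → ℝ} (hf : IsSchwartz f) (hg : IsSchwartz g)
    (x : ESp d) :
    gradInner d (fun y => f y * g y) h x = gradInner d f h x * g x + f x * gradInner d g h x := by
  simp only [gradInner, pd_mul hf.differentiable hg.differentiable, Finset.sum_mul,
    Finset.mul_sum, ← Finset.sum_add_distrib]
  exact Finset.sum_congr rfl fun j _ => by ring

theorem lap_eq_laplacian (φ : 𝓢(ESp d, ℝ)) : lap d φ = ⇑(Δ φ : 𝓢(ESp d, ℝ)) := by
  have hpd (ψ : 𝓢(ESp d, ℝ)) (j : Fin d) :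
      pd d j ψ = ⇑(∂_{EuclideanSpace.single j (1 : ℝ)} ψ : 𝓢(ESp d, ℝ)) :=
    funext fun x => (SchwartzMap.lineDerivOp_apply_eq_fderiv _ ψ x).symm
  ext x
  simp [lap, hpd, SchwartzMap.laplacian_eq_sum (EuclideanSpace.basisFun (Fin d) ℝ)]

theorem integral_mul_lap_comm {f g : ESp d → ℝ} (hf : IsSchwartz f) (hg : IsSchwartz g) :
    ∫ x, f x * lap d g x = ∫ x, lap d f x * g x := by
  obtain ⟨φ, rfl⟩ := hf
  obtain ⟨ψ, rfl⟩ := hg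
  simpa only [lap_eq_laplacian] using
    SchwartzMap.integral_mul_laplacian_right_eq_left (μ := volume) φ ψ

theorem IsEigen.isSchwartz {F : Type*} [NormedAddCommGroup F] [NormedSpace ℝ F] {μ : ℝ}
    {e : ESp d → F} (h : IsEigen d μ e) : IsSchwartz e :=
  h.2.1

theorem IsEigen.lap_eq {μ : ℝ} {e : ESp d → ℝ} (h : IsEigen d μ e) (x : ESp d) :
    lap d e x = ‖x‖ ^ 2 * e x - μ ^ 2 * e x := by
  have := h.2.2 x
  simp only [Hop, smul_eq_mul] at this
  linarith

section FourEigenfunctions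

variable {μ₁ μ₂ μ₃ μ₄ : ℝ} {e₁ e₂ e₃ e₄ : ESp d → ℝ}

theorem mul_lap_sub_lap_mul_of_isEigen (h₁ : IsEigen d μ₁ e₁) (h₂ : IsEigen d μ₂ e₂)
    (h₃ : IsEigen d μ₃ e₃) (h₄ : IsEigen d μ₄ e₄) (x : ESp d) :
    e₁ x * lap d (fun y => e₂ y * e₃ y * e₄ y) x - lap d e₁ x * (e₂ x * e₃ x * e₄ x)
      = (μ₁ ^ 2 - μ₂ ^ 2 - μ₃ ^ 2 - μ₄ ^ 2) * (e₁ x * e₂ x * e₃ x * e₄ x)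
        + 2 * (gradInner d e₂ e₃ x * (e₁ x * e₄ x) + gradInner d e₂ e₄ x * (e₁ x * e₃ x)
          + gradInner d e₃ e₄ x * (e₁ x * e₂ x) + ‖x‖ ^ 2 * (e₁ x * e₂ x * e₃ x * e₄ x)) := by
  have s₂ := h₂.isSchwartz
  have s₃ := h₃.isSchwartz
  rw [lap_mul (s₂.mul s₃) h₄.isSchwartz, lap_mul s₂ s₃, gradInner_mul_left s₂ s₃,
    h₁.lap_eq, h₂.lap_eq, h₃.lap_eq, h₄.lap_eq]
  ring

theorem integral_four_isEigen_relation (h₁ : IsEigen d μ₁ e₁) (h₂ : IsEigen d μ₂ e₂)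
    (h₃ : IsEigen d μ₃ e₃) (h₄ : IsEigen d μ₄ e₄) :
    (μ₁ ^ 2 - μ₂ ^ 2 - μ₃ ^ 2 - μ₄ ^ 2) * (∫ x, e₁ x * e₂ x * e₃ x * e₄ x)
      + 2 * ((∫ x, gradInner d e₂ e₃ x * (e₁ x * e₄ x))
        + (∫ x, gradInner d e₂ e₄ x * (e₁ x * e₃ x))
        + (∫ x, gradInner d e₃ e₄ x * (e₁ x * e₂ x))
        + ∫ x, ‖x‖ ^ 2 * (e₁ x * e₂ x * e₃ x * e₄ x)) = 0 := by
  have s₁ := h₁.isSchwartz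
  have s₂ := h₂.isSchwartz
  have s₃ := h₃.isSchwartz
  have s₄ := h₄.isSchwartz
  have s₂₃₄ := (s₂.mul s₃).mul s₄
  have sF := ((s₁.mul s₂).mul s₃).mul s₄
  have hF := sF.integrable (μ := volume)
  have hG₁ := ((s₂.gradInner s₃).mul (s₁.mul s₄)).integrable (μ := volume)
  have hG₂ := ((s₂.gradInner s₄).mul (s₁.mul s₃)).integrable (μ := volume)
  have hG₃ := ((s₃.gradInner s₄).mul (s₁.mul s₂)).integrable (μ := volume)
  have hG₄ : Integrable fun x : ESp d => ‖x‖ ^ 2 * (e₁ x * e₂ x * e₃ x * e₄ x) :=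
    (sF.temperate_smul (Function.hasTemperateGrowth_norm_sq _)).integrable
  have green : ∫ x, (e₁ x * lap d (fun y => e₂ y * e₃ y * e₄ y) x
      - lap d e₁ x * (e₂ x * e₃ x * e₄ x)) = 0 := by
    rw [integral_sub (s₁.mul s₂₃₄.lap).integrable (s₁.lap.mul s₂₃₄).integrable,
      integral_mul_lap_comm s₁ s₂₃₄, sub_self]
  simp only [mul_lap_sub_lap_mul_of_isEigen h₁ h₂ h₃ h₄] at green
  rwa [integral_add (hF.const_mul _) (by fun_prop), integral_const_mul, integral_const_mul,
    integral_add (by fun_prop) hG₄, integral_add (by fun_prop) hG₃,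
    integral_add hG₁ hG₂] at green

end FourEigenfunctions

end EuclideanSpace

theorem stmt17_general (d : ℕ) (μ₁ μ₂ μ₃ μ₄ : ℝ) (e₁ e₂ e₃ e₄ : ESp d → ℝ)
    (h₁ : IsEigen d μ₁ e₁) (h₂ : IsEigen d μ₂ e₂) (h₃ : IsEigen d μ₃ e₃)
    (h₄ : IsEigen d μ₄ e₄) (hne : μ₁ ^ 2 ≠ μ₂ ^ 2 + μ₃ ^ 2 + μ₄ ^ 2) :
    ∫ x : ESp d, e₁ x * e₂ x * e₃ x * e₄ x
      = -2 / (μ₁ ^ 2 - μ₂ ^ 2 - μ₃ ^ 2 - μ₄ ^ 2)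
        * ((∫ x : ESp d, (∑ j : Fin d, pd d j e₂ x * pd d j e₃ x) * (e₁ x * e₄ x))
          + (∫ x : ESp d, (∑ j : Fin d, pd d j e₂ x * pd d j e₄ x) * (e₁ x * e₃ x))
          + (∫ x : ESp d, (∑ j : Fin d, pd d j e₃ x * pd d j e₄ x) * (e₁ x * e₂ x))
          + ∫ x : ESp d, ‖x‖ ^ 2 * (e₁ x * e₂ x * e₃ x * e₄ x)) := by
  have hc : μ₁ ^ 2 - μ₂ ^ 2 - μ₃ ^ 2 - μ₄ ^ 2 ≠ 0 := fun h => hne (by linarith)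
  have key := integral_four_isEigen_relation h₁ h₂ h₃ h₄
  rw [div_mul_eq_mul_div, eq_div_iff hc]
  simp only [gradInner] at key
  linarith

/-- First-step spectral-interaction identity for four eigenfunctions of `H`. -/
theorem stmt17 (d : ℕ) (hd : 1 ≤ d) (μ₁ μ₂ μ₃ μ₄ : ℝ) (e₁ e₂ e₃ e₄ : ESp d → ℝ)
    (h₁ : IsEigen d μ₁ e₁) (h₂ : IsEigen d μ₂ e₂) (h₃ : IsEigen d μ₃ e₃)
    (h₄ : IsEigen d μ₄ e₄) (hne : μ₁ ^ 2 ≠ μ₂ ^ 2 + μ₃ ^ 2 + μ₄ ^ 2) :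
    ∫ x : ESp d, e₁ x * e₂ x * e₃ x * e₄ x
      = -2 / (μ₁ ^ 2 - μ₂ ^ 2 - μ₃ ^ 2 - μ₄ ^ 2)
        * ((∫ x : ESp d, (∑ j : Fin d, pd d j e₂ x * pd d j e₃ x) * (e₁ x * e₄ x))
          + (∫ x : ESp d, (∑ j : Fin d, pd d j e₂ x * pd d j e₄ x) * (e₁ x * e₃ x))
          + (∫ x : ESp d, (∑ j : Fin d, pd d j e₃ x * pd d j e₄ x) * (e₁ x * e₂ x))
          + ∫ x : ESp d, ‖x‖ ^ 2 * (e₁ x * e₂ x * e₃ x * e₄ x)) :=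
  stmt17_general d μ₁ μ₂ μ₃ μ₄ e₁ e₂ e₃ e₄ h₁ h₂ h₃ h₄ hne
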